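/- The 3-dimensional representation ρ of the small quantum group of sl₃ at a primitive 3rd root of unity ε, defined on Chevalley generators by the explicit matrices E_α = E₂₃, E_β = E₃₁, F_α = E₃₂, F_β = E₁₃, K_{λ₁} = diag(z, z⁻², z) with z³ = ε², and K_α = diag(1, ε, ε²), satisfies the quantum Serre and commutation relations of U_ε(sl₃) (with the simply-connected lattice), and ρ is surjective onto Mat₃(ℂ), hence irreducible. -/
import Mathlib


open Matrix

/-- `3×3` complex matrices. -/
abbrev M3 := Matrix (Fin 3) (Fin 3) ℂ

set_option maxHeartbeats 4000000 in
/-- The explicit matrices `E_α = E₂₃`, `E_β = E₃₁`, `F_α = E₃₂`, `F_β = E₁₃`,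
`K_{λ₁} = diag(z, z⁻², z)`, `K_α = diag(1, ε, ε²)` (with inverses and
`K_β = diag(ε², 1, ε)`) satisfy all defining relations of `U_ε(sl₃)` at a
primitive third root of unity `ε` (here `z³ = ε²`), generate `Mat₃(ℂ)` as a
`ℂ`-algebra, and the resulting `3`-dimensional representation is irreducible. -/
theorem stmt14 (ε z : ℂ) (hε3 : ε ^ 3 = 1) (hε1 : ε ≠ 1) (hz : z ^ 3 = ε ^ 2) :
    let Eα : M3 := !![0,0,0; 0,0,1; 0,0,0]
    let Eβ : M3 := !![0,0,0; 0,0,0; 1,0,0]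
    let Fα : M3 := !![0,0,0; 0,0,0; 0,1,0]
    let Fβ : M3 := !![0,0,1; 0,0,0; 0,0,0]
    let Kl : M3 := !![z,0,0; 0,(z^2)⁻¹,0; 0,0,z]
    let Kα : M3 := !![1,0,0; 0,ε,0; 0,0,ε^2]
    let Kαi : M3 := !![1,0,0; 0,ε^2,0; 0,0,ε]
    let Kβ : M3 := !![ε^2,0,0; 0,1,0; 0,0,ε]
    let Kβi : M3 := !![ε,0,0; 0,1,0; 0,0,ε^2]
    -- the K's are invertible, commute, and K_β comes from the lattice generators
    (Kα * Kαi = 1) ∧ (Kβ * Kβi = 1) ∧ (Kl * Kα = Kα * Kl) ∧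
    (Kβ = Kl ^ 3 * Kαi * Kαi) ∧
    -- K–E relations: K_μ E_γ = ε^{(μ|γ)} E_γ K_μ
    (Kα * Eα = (ε ^ 2) • (Eα * Kα)) ∧ (Kα * Eβ = ε⁻¹ • (Eβ * Kα)) ∧
    (Kβ * Eα = ε⁻¹ • (Eα * Kβ)) ∧ (Kβ * Eβ = (ε ^ 2) • (Eβ * Kβ)) ∧
    (Kl * Eα = ε • (Eα * Kl)) ∧ (Kl * Eβ = Eβ * Kl) ∧
    -- K–F relations: K_μ F_γ = ε^{-(μ|γ)} F_γ K_μ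
    (Kα * Fα = (ε ^ 2)⁻¹ • (Fα * Kα)) ∧ (Kα * Fβ = ε • (Fβ * Kα)) ∧
    (Kβ * Fα = ε • (Fα * Kβ)) ∧ (Kβ * Fβ = (ε ^ 2)⁻¹ • (Fβ * Kβ)) ∧
    (Kl * Fα = ε⁻¹ • (Fα * Kl)) ∧ (Kl * Fβ = Fβ * Kl) ∧
    -- E–F relations: [E_γ, F_δ] = δ_{γδ} (K_γ - K_{-γ})/(ε - ε⁻¹)
    (Eα * Fβ = Fβ * Eα) ∧ (Eβ * Fα = Fα * Eβ) ∧
    (Eα * Fα - Fα * Eα = (ε - ε⁻¹)⁻¹ • (Kα - Kαi)) ∧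
    (Eβ * Fβ - Fβ * Eβ = (ε - ε⁻¹)⁻¹ • (Kβ - Kβi)) ∧
    -- quantum Serre relations
    (Eα ^ 2 * Eβ - (ε + ε⁻¹) • (Eα * Eβ * Eα) + Eβ * Eα ^ 2 = 0) ∧
    (Eβ ^ 2 * Eα - (ε + ε⁻¹) • (Eβ * Eα * Eβ) + Eα * Eβ ^ 2 = 0) ∧
    (Fα ^ 2 * Fβ - (ε + ε⁻¹) • (Fα * Fβ * Fα) + Fβ * Fα ^ 2 = 0) ∧
    (Fβ ^ 2 * Fα - (ε + ε⁻¹) • (Fβ * Fα * Fβ) + Fα * Fβ ^ 2 = 0) ∧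
    -- ρ is surjective onto Mat₃(ℂ) …
    (Algebra.adjoin ℂ ({Eα, Eβ, Fα, Fβ, Kl, Kα} : Set M3) = ⊤) ∧
    -- … hence the representation is irreducible
    (∀ p : Submodule ℂ (Fin 3 → ℂ),
      (∀ x ∈ p, Eα.mulVec x ∈ p) → (∀ x ∈ p, Eβ.mulVec x ∈ p) →
      (∀ x ∈ p, Fα.mulVec x ∈ p) → (∀ x ∈ p, Fβ.mulVec x ∈ p) →
      (∀ x ∈ p, Kl.mulVec x ∈ p) → (∀ x ∈ p, Kα.mulVec x ∈ p) →
      p = ⊥ ∨ p = ⊤) := by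
  have hε0 : ε ≠ 0 := fun h => by simp [h] at hε3
  have hq : ε^2 + ε + 1 = 0 := by
    have h : (ε - 1) * (ε^2 + ε + 1) = 0 := by linear_combination hε3
    rcases mul_eq_zero.mp h with h | h
    · exact absurd (sub_eq_zero.mp h) hε1
    · exact h
  have hinv : ε⁻¹ = ε^2 := inv_eq_of_mul_eq_one_right (by linear_combination hε3)
  have h2inv : (ε^2)⁻¹ = ε := inv_eq_of_mul_eq_one_right (by linear_combination hε3)
  have hz2 : (z^2)⁻¹ = ε * z := inv_eq_of_mul_eq_one_right (by linear_combination ε*hz + hε3)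
  have hd : (ε - ε⁻¹)⁻¹ = (ε^2 - ε)/3 := by
    rw [hinv]
    exact inv_eq_of_mul_eq_one_right (by linear_combination (-1/3)*hq + (2/3 - ε/3)*hε3)
  have hd2 : (ε - ε^2)⁻¹ = (ε^2 - ε)/3 :=
    inv_eq_of_mul_eq_one_right (by linear_combination (-1/3)*hq + (2/3 - ε/3)*hε3)
  refine ⟨?_, ?_, ?_, ?_, ?_, ?_, ?_, ?_, ?_, ?_, ?_, ?_, ?_, ?_, ?_, ?_, ?_, ?_, ?_, ?_,
    ?_, ?_, ?_, ?_, ?adj, ?irr⟩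
  case adj =>
    set A := Algebra.adjoin ℂ
      ({!![0,0,0; 0,0,1; 0,0,0], !![0,0,0; 0,0,0; 1,0,0], !![0,0,0; 0,0,0; 0,1,0],
        !![0,0,1; 0,0,0; 0,0,0], !![z,0,0; 0,(z^2)⁻¹,0; 0,0,z],
        !![1,0,0; 0,ε,0; 0,0,ε^2]} : Set M3) with hA
    have hEα : (!![0,0,0; 0,0,1; 0,0,0] : M3) ∈ A := Algebra.subset_adjoin (by simp)
    have hEβ : (!![0,0,0; 0,0,0; 1,0,0] : M3) ∈ A := Algebra.subset_adjoin (by simp)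
    have hFα : (!![0,0,0; 0,0,0; 0,1,0] : M3) ∈ A := Algebra.subset_adjoin (by simp)
    have hFβ : (!![0,0,1; 0,0,0; 0,0,0] : M3) ∈ A := Algebra.subset_adjoin (by simp)
    have h21 : (!![0,0,0; 1,0,0; 0,0,0] : M3) ∈ A := by
      have := mul_mem hEα hEβ
      convert this using 1
      ext i j; fin_cases i <;> fin_cases j <;>
        simp [Matrix.mul_apply, Fin.sum_univ_three, Matrix.vecHead, Matrix.vecTail, Function.comp]
    have h12 : (!![0,1,0; 0,0,0; 0,0,0] : M3) ∈ A := by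
      have := mul_mem hFβ hFα
      convert this using 1
      ext i j; fin_cases i <;> fin_cases j <;>
        simp [Matrix.mul_apply, Fin.sum_univ_three, Matrix.vecHead, Matrix.vecTail, Function.comp]
    have h11 : (!![1,0,0; 0,0,0; 0,0,0] : M3) ∈ A := by
      have := mul_mem hFβ hEβ
      convert this using 1
      ext i j; fin_cases i <;> fin_cases j <;>
        simp [Matrix.mul_apply, Fin.sum_univ_three, Matrix.vecHead, Matrix.vecTail, Function.comp]
    have h22 : (!![0,0,0; 0,1,0; 0,0,0] : M3) ∈ A := by
      have := mul_mem hEα hFα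
      convert this using 1
      ext i j; fin_cases i <;> fin_cases j <;>
        simp [Matrix.mul_apply, Fin.sum_univ_three, Matrix.vecHead, Matrix.vecTail, Function.comp]
    have h33 : (!![0,0,0; 0,0,0; 0,0,1] : M3) ∈ A := by
      have := mul_mem hEβ hFβ
      convert this using 1
      ext i j; fin_cases i <;> fin_cases j <;>
        simp [Matrix.mul_apply, Fin.sum_univ_three, Matrix.vecHead, Matrix.vecTail, Function.comp]
    rw [eq_top_iff]
    rintro x -
    have hx : x = x 0 0 • !![1,0,0; 0,0,0; 0,0,0] + x 0 1 • !![0,1,0; 0,0,0; 0,0,0]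
        + x 0 2 • !![0,0,1; 0,0,0; 0,0,0] + x 1 0 • !![0,0,0; 1,0,0; 0,0,0]
        + x 1 1 • !![0,0,0; 0,1,0; 0,0,0] + x 1 2 • !![0,0,0; 0,0,1; 0,0,0]
        + x 2 0 • !![0,0,0; 0,0,0; 1,0,0] + x 2 1 • !![0,0,0; 0,0,0; 0,1,0]
        + x 2 2 • !![0,0,0; 0,0,0; 0,0,1] := by
      ext i j; fin_cases i <;> fin_cases j <;>
        simp [Matrix.vecHead, Matrix.vecTail, Function.comp]
    rw [hx]
    exact add_mem (add_mem (add_mem (add_mem (add_mem (add_mem (add_mem (add_mem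
      (SMulMemClass.smul_mem _ h11) (SMulMemClass.smul_mem _ h12)) (SMulMemClass.smul_mem _ hFβ))
      (SMulMemClass.smul_mem _ h21)) (SMulMemClass.smul_mem _ h22)) (SMulMemClass.smul_mem _ hEα))
      (SMulMemClass.smul_mem _ hEβ)) (SMulMemClass.smul_mem _ hFα)) (SMulMemClass.smul_mem _ h33)
  case irr =>
    intro p hEα hEβ hFα hFβ _ _
    by_cases hbot : p = ⊥
    · exact Or.inl hbot
    right
    obtain ⟨x, hxp, hx0⟩ := Submodule.exists_mem_ne_zero_of_ne_bot hbot
    set e0 : Fin 3 → ℂ := ![1,0,0] with he0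
    set e1 : Fin 3 → ℂ := ![0,1,0] with he1
    set e2 : Fin 3 → ℂ := ![0,0,1] with he2
    have key : e2 ∈ p := by
      have hcases : x 0 ≠ 0 ∨ x 1 ≠ 0 ∨ x 2 ≠ 0 := by
        by_contra h
        push_neg at h
        obtain ⟨h0, h1, h2⟩ := h
        apply hx0
        funext i; fin_cases i <;> assumption
      rcases hcases with h | h | h
      · have := hEβ x hxp
        have heq : (!![0,0,0; 0,0,0; 1,0,0] : M3).mulVec x = (x 0) • e2 := by
          funext i; fin_cases i <;>
            simp [e2, Matrix.mulVec, dotProduct, Fin.sum_univ_three, Matrix.vecHead,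
              Matrix.vecTail]
        have : (x 0) • e2 ∈ p := heq ▸ this
        have := p.smul_mem (x 0)⁻¹ this
        rwa [smul_smul, inv_mul_cancel₀ h, one_smul] at this
      · have := hFα x hxp
        have heq : (!![0,0,0; 0,0,0; 0,1,0] : M3).mulVec x = (x 1) • e2 := by
          funext i; fin_cases i <;>
            simp [e2, Matrix.mulVec, dotProduct, Fin.sum_univ_three, Matrix.vecHead,
              Matrix.vecTail]
        have : (x 1) • e2 ∈ p := heq ▸ this
        have := p.smul_mem (x 1)⁻¹ this
        rwa [smul_smul, inv_mul_cancel₀ h, one_smul] at this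
      · have := hFβ x hxp
        have heq : (!![0,0,1; 0,0,0; 0,0,0] : M3).mulVec x = (x 2) • e0 := by
          funext i; fin_cases i <;>
            simp [e0, Matrix.mulVec, dotProduct, Fin.sum_univ_three, Matrix.vecHead,
              Matrix.vecTail]
        have h0m : e0 ∈ p := by
          have : (x 2) • e0 ∈ p := heq ▸ this
          have := p.smul_mem (x 2)⁻¹ this
          rwa [smul_smul, inv_mul_cancel₀ h, one_smul] at this
        have := hEβ e0 h0m
        have heq2 : (!![0,0,0; 0,0,0; 1,0,0] : M3).mulVec e0 = e2 := by
          funext i; fin_cases i <;>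
            simp [e0, e2, Matrix.mulVec, dotProduct, Fin.sum_univ_three, Matrix.vecHead,
              Matrix.vecTail]
        rwa [heq2] at this
    have h0m : e0 ∈ p := by
      have := hFβ e2 key
      have heq : (!![0,0,1; 0,0,0; 0,0,0] : M3).mulVec e2 = e0 := by
        funext i; fin_cases i <;>
          simp [e0, e2, Matrix.mulVec, dotProduct, Fin.sum_univ_three, Matrix.vecHead,
            Matrix.vecTail]
      rwa [heq] at this
    have h1m : e1 ∈ p := by
      have := hEα e2 key
      have heq : (!![0,0,0; 0,0,1; 0,0,0] : M3).mulVec e2 = e1 := by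
        funext i; fin_cases i <;>
          simp [e1, e2, Matrix.mulVec, dotProduct, Fin.sum_univ_three, Matrix.vecHead,
            Matrix.vecTail]
      rwa [heq] at this
    rw [eq_top_iff]
    rintro v -
    have hv : v = v 0 • e0 + v 1 • e1 + v 2 • e2 := by
      funext i; fin_cases i <;> simp [e0, e1, e2, Matrix.vecHead, Matrix.vecTail]
    rw [hv]
    exact add_mem (add_mem (p.smul_mem _ h0m) (p.smul_mem _ h1m)) (p.smul_mem _ key)
  all_goals
    · try simp only [hd, hd2, hinv, h2inv, hz2]
      ext i j
      fin_cases i <;> fin_cases j <;>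
        simp [Matrix.mul_apply, Fin.sum_univ_three, Matrix.vecHead, Matrix.vecTail,
          hd2, pow_succ, pow_zero] <;>
        first
          | ring1
          | linear_combination hε3
          | linear_combination -hε3
          | linear_combination -ε*hε3
          | linear_combination (-1/3)*hq + (2/3 - ε/3)*hε3
          | linear_combination (1/3)*hq + (-2/3 + ε/3)*hε3
          | linear_combination -z*hε3
          | linear_combination -hz
          | linear_combination -ε^2*hz - ε*hε3
          | linear_combination (-ε^7)*hz + (-(ε^6+ε^3+1))*hε3
          | linear_combination ε*hε3
          | linear_combination ε^2*hε3
          | linear_combination z*hε3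
          | linear_combination hz
          | linear_combination ε*hz
          | linear_combination ε^2*hz
          | linear_combination hz + hε3
          | linear_combination ε*hz + hε3
          | linear_combination ε^2*hz + hε3
          | linear_combination ε*hz + z^3*hε3
          | linear_combination (ε*z^3+1)*hε3 + ε^5*hz
          | linear_combination hq
          | linear_combination -hq
          | linear_combination ε*hq
          | linear_combination (z/3)*hq
          | linear_combination (1/3)*hq
          | linear_combination (-1/3)*hq
          | linear_combination (ε/3)*hq
          | linear_combination (-ε/3)*hq
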